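/- arXiv:1603.07634 — 2 statements merged into one kernel-verified Lean document; each statement's English description precedes it below -/
import Mathlib

section
/- Let P₀, …, P_{N−1} be N×N complex matrices satisfying P_j P_k = δ_{jk} P_j for all j,k and Σ_{j=0}^{N−1} P_j = I_N. For 0 ≤ k ≤ N−1 and λ ∈ ℂ with λ² ≠ 1, define Φ_k = I_N + (4λ/(1−λ)²) Σ_{j=0}^{k−1} P_j − (2/(1−λ)) P_k and Ψ_k = I_N − (4λ/(1+λ)²) Σ_{j=0}^{k−1} P_j − (2/(1+λ)) P_k. Then Φ_k Ψ_k = I_N, i.e., Ψ_k is the inverse of Φ_k. -/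
open Matrix Finset

/-- For a complete family of mutually orthogonal projectors
`P₀,…,P_{N−1}` and `λ² ≠ 1`, the soliton wavefunction
`Φ_k = I + (4λ/(1−λ)²)Σ_{j<k}P_j − (2/(1−λ))P_k` has inverse
`Ψ_k = I − (4λ/(1+λ)²)Σ_{j<k}P_j − (2/(1+λ))P_k`. -/
theorem stmt_4 {N : ℕ} (P : Fin N → Matrix (Fin N) (Fin N) ℂ)
    (horth : ∀ j k, P j * P k = if j = k then P j else 0)
    (hcomp : ∑ j, P j = 1)
    (k : Fin N) (lam : ℂ) (h1 : lam ≠ 1) (h2 : lam ≠ -1) :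
    ((1 : Matrix (Fin N) (Fin N) ℂ)
        + (4 * lam / (1 - lam) ^ 2) • ∑ j ∈ Finset.Iio k, P j
        - (2 / (1 - lam)) • P k)
      * ((1 : Matrix (Fin N) (Fin N) ℂ)
        - (4 * lam / (1 + lam) ^ 2) • ∑ j ∈ Finset.Iio k, P j
        - (2 / (1 + lam)) • P k) = 1 := by
  have hm : (1 : ℂ) - lam ≠ 0 := sub_ne_zero.mpr (Ne.symm h1)
  have hp : (1 : ℂ) + lam ≠ 0 := by
    intro h; apply h2; linear_combination h
  set S : Matrix (Fin N) (Fin N) ℂ := ∑ j ∈ Finset.Iio k, P j with hS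
  have hSS : S * S = S := by
    rw [hS, Finset.sum_mul_sum]
    refine Finset.sum_congr rfl fun i hi => ?_
    rw [Finset.sum_congr rfl fun j _ => horth i j]
    simp [Finset.sum_ite_eq, hi]
  have hSP : S * P k = 0 := by
    rw [hS, Finset.sum_mul]
    refine Finset.sum_eq_zero fun i hi => ?_
    rw [horth]
    simp [(Finset.mem_Iio.mp hi).ne]
  have hPS : P k * S = 0 := by
    rw [hS, Finset.mul_sum]
    refine Finset.sum_eq_zero fun i hi => ?_
    rw [horth]
    simp [(Finset.mem_Iio.mp hi).ne']
  have hPP : P k * P k = P k := by rw [horth]; simp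
  set a : ℂ := 4 * lam / (1 - lam) ^ 2 with ha
  set b : ℂ := 2 / (1 - lam) with hb
  set c : ℂ := 4 * lam / (1 + lam) ^ 2 with hc
  set d : ℂ := 2 / (1 + lam) with hd
  have hac : a * c = a - c := by
    rw [ha, hc]; field_simp; ring
  have hbd : b * d = b + d := by
    rw [hb, hd]; field_simp; ring
  have expand : (1 + a • S - b • P k) * (1 - c • S - d • P k)
      = 1 - c • S - d • P k + a • S - (a * c) • S - b • P k + (b * d) • P k := by
    simp only [mul_sub, sub_mul, add_mul, mul_add, one_mul, mul_one,
      smul_mul_assoc, mul_smul_comm, smul_smul, hSS, hSP, hPS, hPP,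
      smul_zero, mul_zero, sub_zero, add_zero, zero_sub, smul_add, smul_sub]
    module
  rw [expand, hac, hbd, sub_smul, add_smul]
  abel
end

section
/- Let P₀, …, P_{N−1} be N×N complex matrices with P_j P_k = δ_{jk} P_j and Σ_{j=0}^{N−1} P_j = I_N, and let F_k = −i(P_k + 2 Σ_{j=0}^{k−1} P_j) + i c_k I_N where c_k = (1+2k)/N. Then for every k with 0 < k < N−1, (F_k − i c_k I_N)(F_k − i(c_k − 1) I_N)(F_k − i(c_k − 2) I_N) = 0. -/
open Matrix Finset

/-- For `0 < k < N−1`, the immersion function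
`F_k = −i(P_k + 2Σ_{j<k}P_j) + i c_k I`, `c_k = (1+2k)/N`, satisfies the cubic
minimal polynomial identity
`(F_k − i c_k I)(F_k − i(c_k−1)I)(F_k − i(c_k−2)I) = 0`. -/
theorem stmt_6 {N : ℕ} (P : Fin N → Matrix (Fin N) (Fin N) ℂ)
    (horth : ∀ j k, P j * P k = if j = k then P j else 0)
    (hcomp : ∑ j, P j = 1)
    (c : Fin N → ℂ) (hc : ∀ k, c k = (1 + 2 * (k : ℕ)) / (N : ℂ))
    (F : Fin N → Matrix (Fin N) (Fin N) ℂ)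
    (hF : ∀ k, F k = (-Complex.I) • (P k + (2 : ℂ) • ∑ j ∈ Finset.Iio k, P j)
        + (Complex.I * c k) • (1 : Matrix (Fin N) (Fin N) ℂ))
    (k : Fin N) (hk0 : 0 < (k : ℕ)) (hkN : (k : ℕ) < N - 1) :
    (F k - (Complex.I * c k) • (1 : Matrix (Fin N) (Fin N) ℂ))
      * (F k - (Complex.I * (c k - 1)) • (1 : Matrix (Fin N) (Fin N) ℂ))
      * (F k - (Complex.I * (c k - 2)) • (1 : Matrix (Fin N) (Fin N) ℂ)) = 0 := by
  set S : Matrix (Fin N) (Fin N) ℂ := ∑ j ∈ Finset.Iio k, P j with hSdef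
  have hidem : P k * P k = P k := by simpa using horth k k
  have hPkS : P k * S = 0 := by
    rw [hSdef, Finset.mul_sum]
    refine Finset.sum_eq_zero fun j hj => ?_
    rw [horth, if_neg fun h => absurd h.symm (Finset.mem_Iio.mp hj).ne]
  have hSPk : S * P k = 0 := by
    rw [hSdef, Finset.sum_mul]
    refine Finset.sum_eq_zero fun j hj => ?_
    rw [horth, if_neg (Finset.mem_Iio.mp hj).ne]
  have hSS : S * S = S := by
    rw [hSdef, Finset.sum_mul_sum]
    simp only [horth]
    rw [Finset.sum_comm]
    refine Finset.sum_congr rfl fun j hj => ?_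
    simp [Finset.sum_ite_eq, Finset.mem_Iio.mp hj]
  set Q : Matrix (Fin N) (Fin N) ℂ := P k + (2 : ℂ) • S with hQdef
  have h1 : F k - (Complex.I * c k) • (1 : Matrix (Fin N) (Fin N) ℂ)
      = (-Complex.I) • Q := by
    rw [hF k]; module
  have h2 : F k - (Complex.I * (c k - 1)) • (1 : Matrix (Fin N) (Fin N) ℂ)
      = (-Complex.I) • (Q - 1) := by
    rw [hF k]; module
  have h3 : F k - (Complex.I * (c k - 2)) • (1 : Matrix (Fin N) (Fin N) ℂ)
      = (-Complex.I) • (Q - (2 : ℂ) • 1) := by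
    rw [hF k]; module
  rw [h1, h2, h3]
  have hQ2 : Q * Q = P k + (4 : ℂ) • S := by
    rw [hQdef]
    simp only [mul_add, add_mul, smul_mul_assoc, mul_smul_comm, hidem, hPkS, hSPk, hSS,
      smul_smul, smul_zero, add_zero, zero_add]
    module
  have hQQ1 : Q * (Q - 1) = (2 : ℂ) • S := by
    rw [mul_sub, mul_one, hQ2, hQdef]; module
  have hkey : Q * (Q - 1) * (Q - (2 : ℂ) • 1) = 0 := by
    rw [hQQ1, hQdef]
    simp only [smul_mul_assoc, mul_sub, mul_add, mul_smul_comm, hSPk, hSS, mul_one, smul_zero]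
    module
  simp only [smul_mul_assoc, mul_smul_comm, smul_smul]
  rw [hkey, smul_zero]
end
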